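/- arXiv:1407.5674 — 3 statements merged into one kernel-verified Lean document; each statement's English description precedes it below -/
import Mathlib

section
/- Let X' and Y be finite sets of points in the plane with the l∞ norm, κ : X' → ℕ with 1 ≤ κ(x) ≤ |Y|, α ≥ 1, and for y ∈ Y, r ≥ 0 let C_y(r) = {x ∈ X' : max(‖y − x‖∞, dκ(x)) ≤ r}. Let β : X' → ℝ≥0, and let F be a finite set of pairs (y_i, r_i) such that (i) the closed l∞ disks disk(y_i, r_i) are pairwise disjoint, and (ii) each pair in F is tight, i.e., ∑_{x ∈ C_{y_i}(r_i)} β(x) = r_i^α. Then ∑_{(y_i, r_i) ∈ F} r_i^α ≤ ∑_{x ∈ X'} β(x). -/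
/-- The κ-th smallest value (1-indexed) in the multiset `{‖x - y‖_∞ : y ∈ Y}`,
where points of the plane are modeled as `Fin 2 → ℝ` whose norm is the sup (l∞) norm. -/
noncomputable def kthDist (Y : Finset (Fin 2 → ℝ)) (x : Fin 2 → ℝ) (k : ℕ) : ℝ :=
  ((Y.val.map fun y => ‖x - y‖).sort (· ≤ ·)).getD (k - 1) 0

theorem stmt2 (X' Y : Finset (Fin 2 → ℝ)) (κ : (Fin 2 → ℝ) → ℕ)
    (hκ : ∀ x ∈ X', 1 ≤ κ x ∧ κ x ≤ Y.card)
    (α : ℝ) (hα : 1 ≤ α)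
    (β : (Fin 2 → ℝ) → ℝ) (hβ : ∀ x ∈ X', 0 ≤ β x)
    (F : Finset ((Fin 2 → ℝ) × ℝ))
    (hFY : ∀ p ∈ F, p.1 ∈ Y)
    (hdisj : (F : Set ((Fin 2 → ℝ) × ℝ)).Pairwise fun p q =>
      Disjoint (Metric.closedBall p.1 p.2) (Metric.closedBall q.1 q.2))
    (htight : ∀ p ∈ F,
      ∑ x ∈ X'.filter (fun x => max ‖p.1 - x‖ (kthDist Y x (κ x)) ≤ p.2), β x = p.2 ^ α) :
    ∑ p ∈ F, p.2 ^ α ≤ ∑ x ∈ X', β x := by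
  set S : ((Fin 2 → ℝ) × ℝ) → Finset (Fin 2 → ℝ) :=
    fun p => X'.filter (fun x => max ‖p.1 - x‖ (kthDist Y x (κ x)) ≤ p.2) with hS
  have hmem : ∀ p, ∀ x ∈ S p, x ∈ Metric.closedBall p.1 p.2 := by
    intro p x hx
    rw [hS, Finset.mem_filter] at hx
    rw [Metric.mem_closedBall, dist_comm, dist_eq_norm]
    exact le_trans (le_max_left _ _) hx.2
  have key : (F : Set ((Fin 2 → ℝ) × ℝ)).PairwiseDisjoint S := by
    intro p hp q hq hpq
    refine Finset.disjoint_left.2 fun x hx hx' => ?_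
    exact Set.disjoint_left.1 (hdisj hp hq hpq) (hmem p x hx) (hmem q x hx')
  calc ∑ p ∈ F, p.2 ^ α = ∑ p ∈ F, ∑ x ∈ S p, β x :=
        Finset.sum_congr rfl fun p hp => (htight p hp).symm
    _ = ∑ x ∈ F.biUnion S, β x := (Finset.sum_biUnion key).symm
    _ ≤ ∑ x ∈ X', β x := by
        refine Finset.sum_le_sum_of_subset_of_nonneg ?_ fun x hx _ => hβ x hx
        intro x hx
        obtain ⟨p, _, hxp⟩ := Finset.mem_biUnion.1 hx
        exact (Finset.mem_filter.1 hxp).1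
end

section
/- Let d ≥ 1 and let D be a finite nonempty family of closed l∞ balls in ℝ^d. Then there exists a subfamily D' ⊆ D with |D'| ≤ 2d such that the intersection of all balls in D' equals the intersection of all balls in D. -/
theorem stmt9 (d : ℕ) (hd : 1 ≤ d)
    (D : Finset ((Fin d → ℝ) × ℝ)) (hD : D.Nonempty)
    (hr : ∀ p ∈ D, 0 ≤ p.2) :
    ∃ D' ⊆ D, D'.card ≤ 2 * d ∧
      (⋂ p ∈ D', Metric.closedBall p.1 p.2) = (⋂ p ∈ D, Metric.closedBall p.1 p.2) := by
  choose u hu hmin using fun i : Fin d =>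
    D.exists_min_image (fun p => p.1 i + p.2) hD
  choose l hl hmax using fun i : Fin d =>
    D.exists_max_image (fun p => p.1 i - p.2) hD
  refine ⟨Finset.image u Finset.univ ∪ Finset.image l Finset.univ, ?_, ?_, ?_⟩
  · intro p hp
    simp only [Finset.mem_union, Finset.mem_image, Finset.mem_univ, true_and] at hp
    rcases hp with ⟨i, rfl⟩ | ⟨i, rfl⟩
    · exact hu i
    · exact hl i
  · calc (Finset.image u Finset.univ ∪ Finset.image l Finset.univ).card
        ≤ (Finset.image u Finset.univ).card + (Finset.image l Finset.univ).card :=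
          Finset.card_union_le _ _
      _ ≤ d + d := add_le_add
          (Finset.card_image_le.trans (by simp))
          (Finset.card_image_le.trans (by simp))
      _ = 2 * d := by ring
  · apply le_antisymm
    · intro z hz
      simp only [Set.mem_iInter] at hz ⊢
      intro p hp
      rw [Metric.mem_closedBall, dist_pi_le_iff (hr p hp)]
      intro i
      have hzu := hz (u i) (by simp [Finset.mem_union, Finset.mem_image])
      have hzl := hz (l i) (by simp [Finset.mem_union, Finset.mem_image])
      rw [Metric.mem_closedBall, dist_pi_le_iff (hr _ (hu i))] at hzu
      rw [Metric.mem_closedBall, dist_pi_le_iff (hr _ (hl i))] at hzl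
      have h1 := hzu i
      have h2 := hzl i
      rw [Real.dist_eq, abs_le] at h1 h2 ⊢
      have hm := hmin i p hp
      have hM := hmax i p hp
      constructor
      · linarith [h2.1]
      · linarith [h1.2]
    · intro z hz
      simp only [Set.mem_iInter] at hz ⊢
      intro p hp
      simp only [Finset.mem_union, Finset.mem_image, Finset.mem_univ, true_and] at hp
      rcases hp with ⟨i, rfl⟩ | ⟨i, rfl⟩
      · exact hz _ (hu i)
      · exact hz _ (hl i)
end

section
/- Let X and Y be finite sets of points in the plane with the l∞ norm, κ : X → ℕ with κ(x) ≤ |Y| for all x, α ≥ 1, and define κ'(x) = max(κ(x) − 1, 0). Suppose r : Y → ℝ≥0 is an assignment under which every x ∈ X is κ'(x)-covered, let X' = {x ∈ X : x is not κ(x)-covered by r}, and let ρ : Y → ℝ≥0 be an outer cover for X' (i.e., for every x ∈ X' there is y ∈ Y with ‖x − y‖∞ ≤ ρ(y) and ρ(y) ≥ dκ(x)). Then there exists an assignment r' : Y → ℝ≥0 with r'(y) ≥ r(y) for all y ∈ Y, such that every x ∈ X is κ(x)-covered by r', and ∑_{y ∈ Y} r'(y)^α − ∑_{y ∈ Y}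 r(y)^α ≤ 4 · 3^α · ∑_{y ∈ Y} ρ(y)^α. -/
/-- The number of servers `y ∈ Y` whose disk of radius `r y` covers `x`. -/
noncomputable def coverCount (Y : Finset (Fin 2 → ℝ)) (r : (Fin 2 → ℝ) → ℝ)
    (x : Fin 2 → ℝ) : ℕ :=
  (Y.filter fun y => ‖x - y‖ ≤ r y).card

lemma list_count (l : List ℝ) (hl : l.Pairwise (· ≤ ·)) (k : ℕ) (hk1 : 1 ≤ k)
    (hkl : k ≤ l.length) :
    k ≤ (l.filter (fun a => decide (a ≤ l.getD (k-1) 0))).length := by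
  have hidx : k - 1 < l.length := by omega
  have hv : l.getD (k-1) 0 = l[k-1] := List.getD_eq_getElem l 0 hidx
  have htake : (l.take k).filter (fun a => decide (a ≤ l.getD (k-1) 0)) = l.take k := by
    rw [List.filter_eq_self]
    intro a ha
    simp only [decide_eq_true_eq, hv]
    obtain ⟨i, hi, rfl⟩ := List.getElem_of_mem ha
    rw [List.getElem_take]
    have hik : i < k := by
      have := hi; simp [List.length_take] at this; omega
    rcases eq_or_lt_of_le (by omega : i ≤ k - 1) with h | h
    · subst h; exact le_rfl
    · exact List.pairwise_iff_getElem.mp hl i (k-1) _ hidx h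
  have hsub : ((l.take k).filter (fun a => decide (a ≤ l.getD (k-1) 0))).Sublist
      (l.filter (fun a => decide (a ≤ l.getD (k-1) 0))) :=
    (List.take_sublist k l).filter _
  have := hsub.length_le
  rw [htake] at this
  rwa [List.length_take, min_eq_left hkl] at this

lemma kth_count (Y : Finset (Fin 2 → ℝ)) (x : Fin 2 → ℝ) (k : ℕ)
    (hk1 : 1 ≤ k) (hkY : k ≤ Y.card) :
    k ≤ (Y.filter fun z => ‖x - z‖ ≤ kthDist Y x k).card := by
  classical
  set M : Multiset ℝ := Y.val.map fun z => ‖x - z‖ with hM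
  set l := M.sort (· ≤ ·) with hldef
  have hlen : l.length = Y.card := by
    simp [hldef, Multiset.length_sort, hM]
  have hsorted : l.Pairwise (· ≤ ·) := Multiset.pairwise_sort _ _
  have hml : (l : Multiset ℝ) = M := Multiset.sort_eq _ _
  have key := list_count l hsorted k hk1 (by omega)
  have hkth : kthDist Y x k = l.getD (k-1) 0 := rfl
  have hcards : (Y.filter fun z => ‖x - z‖ ≤ kthDist Y x k).card
      = (l.filter (fun a => decide (a ≤ l.getD (k-1) 0))).length := by
    have h1 : (Y.filter fun z => ‖x - z‖ ≤ kthDist Y x k).card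
        = Multiset.card (Multiset.filter (fun a => a ≤ kthDist Y x k) M) := by
      rw [hM, Multiset.filter_map, Multiset.card_map]
      rfl
    rw [h1, ← hml, hkth]
    simp [Multiset.filter_coe]
  omega

lemma exists_noncover (Y : Finset (Fin 2 → ℝ)) (r : (Fin 2 → ℝ) → ℝ) (x : Fin 2 → ℝ)
    (k : ℕ) (hk1 : 1 ≤ k) (hkY : k ≤ Y.card)
    (hcov : coverCount Y r x < k) :
    ∃ z ∈ Y, ‖x - z‖ ≤ kthDist Y x k ∧ r z < ‖x - z‖ := by
  classical
  have hbig := kth_count Y x k hk1 hkY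
  have hns : ¬ ((Y.filter fun z => ‖x - z‖ ≤ kthDist Y x k) ⊆
      (Y.filter fun z => ‖x - z‖ ≤ r z)) := by
    intro hsub
    have := Finset.card_le_card hsub
    unfold coverCount at hcov
    omega
  obtain ⟨z, hz1, hz2⟩ := Finset.not_subset.mp hns
  rw [Finset.mem_filter] at hz1
  refine ⟨z, hz1.1, hz1.2, ?_⟩
  by_contra h
  exact hz2 (Finset.mem_filter.mpr ⟨hz1.1, not_lt.mp h⟩)

theorem stmt11 (X Y : Finset (Fin 2 → ℝ)) (κ : (Fin 2 → ℝ) → ℕ)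
    (hκ : ∀ x ∈ X, κ x ≤ Y.card)
    (α : ℝ) (hα : 1 ≤ α)
    (r : (Fin 2 → ℝ) → ℝ) (hr : ∀ y ∈ Y, 0 ≤ r y)
    (hκ'cov : ∀ x ∈ X, κ x - 1 ≤ coverCount Y r x)
    (X' : Finset (Fin 2 → ℝ))
    (hX' : X' = X.filter fun x => coverCount Y r x < κ x)
    (ρ : (Fin 2 → ℝ) → ℝ) (hρ : ∀ y ∈ Y, 0 ≤ ρ y)
    (houter : ∀ x ∈ X', ∃ y ∈ Y, ‖x - y‖ ≤ ρ y ∧ kthDist Y x (κ x) ≤ ρ y) :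
    ∃ r' : (Fin 2 → ℝ) → ℝ,
      (∀ y ∈ Y, r y ≤ r' y) ∧
      (∀ x ∈ X, κ x ≤ coverCount Y r' x) ∧
      (∑ y ∈ Y, r' y ^ α) - (∑ y ∈ Y, r y ^ α) ≤ 4 * 3 ^ α * ∑ y ∈ Y, ρ y ^ α := by
  classical
  -- Step 1: witness and non-coverer choice functions
  have main : ∀ x : (Fin 2 → ℝ), ∃ wx zx : (Fin 2 → ℝ), x ∈ X' →
      wx ∈ Y ∧ zx ∈ Y ∧ ‖x - wx‖ ≤ ρ wx ∧ ‖x - zx‖ ≤ ρ wx ∧ r zx < ‖x - zx‖ := by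
    intro x
    by_cases hx : x ∈ X'
    · obtain ⟨y, hy, hxy, hk⟩ := houter x hx
      rw [hX'] at hx
      have hxX : x ∈ X := (Finset.mem_filter.mp hx).1
      have hlt : coverCount Y r x < κ x := (Finset.mem_filter.mp hx).2
      have hk1 : 1 ≤ κ x := by omega
      obtain ⟨z, hzY, hz1, hz2⟩ := exists_noncover Y r x (κ x) hk1 (hκ x hxX) hlt
      exact ⟨y, z, fun _ => ⟨hy, hzY, hxy, hz1.trans hk, hz2⟩⟩
    · exact ⟨x, x, fun h => absurd h hx⟩
  choose w n hwn using main
  -- Step 2: per-witness selection of at most 4 servers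
  have selex : ∀ y : (Fin 2 → ℝ), ∃ s : Finset (Fin 2 → ℝ), s.card ≤ 4 ∧ (∀ z ∈ s, z ∈ Y) ∧
      ∀ x ∈ X', w x = y → ∃ z ∈ s, r z < ‖x - z‖ ∧ ‖x - z‖ ≤ 3 * ρ y := by
    intro y
    by_cases hG : ∃ x ∈ X', w x = y
    case neg => exact ⟨∅, by simp, by simp, fun x hx hxy => absurd ⟨x, hx, hxy⟩ hG⟩
    case pos =>
    set G := X'.filter (fun x => w x = y) with hGdef
    have hGne : G.Nonempty := by
      obtain ⟨x, hx, hxy⟩ := hG; exact ⟨x, Finset.mem_filter.mpr ⟨hx, hxy⟩⟩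
    have hchoice : ∀ i : Fin 2, ∃ pq : (Fin 2 → ℝ) × (Fin 2 → ℝ), (pq.1 ∈ G ∧ pq.2 ∈ G) ∧
        (∀ x' ∈ G, n x' i - r (n x') ≤ n pq.1 i - r (n pq.1)) ∧
        (∀ x' ∈ G, n pq.2 i + r (n pq.2) ≤ n x' i + r (n x')) := by
      intro i
      obtain ⟨p, hp, hpmax⟩ := Finset.exists_max_image G (fun x => n x i - r (n x)) hGne
      obtain ⟨q, hq, hqmin⟩ := Finset.exists_min_image G (fun x => n x i + r (n x)) hGne
      exact ⟨(p, q), ⟨hp, hq⟩, hpmax, hqmin⟩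
    choose pq hpq hpmax hqmin using hchoice
    set p : Fin 2 → (Fin 2 → ℝ) := fun i => (pq i).1 with hpdef
    set q : Fin 2 → (Fin 2 → ℝ) := fun i => (pq i).2 with hqdef
    have hGfact : ∀ x' ∈ G, x' ∈ X' ∧ ‖x' - y‖ ≤ ρ y ∧ ‖x' - n x'‖ ≤ ρ y ∧
        r (n x') < ‖x' - n x'‖ ∧ n x' ∈ Y := by
      intro x' hx'
      obtain ⟨hx'X', hwx'⟩ := Finset.mem_filter.mp hx'
      obtain ⟨h1, h2, h3, h4, h5⟩ := hwn x' hx'X'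
      rw [hwx'] at h3 h4
      exact ⟨hx'X', h3, h4, h5, h2⟩
    refine ⟨{n (p 0), n (q 0), n (p 1), n (q 1)}, ?_, ?_, ?_⟩
    · have c1 := Finset.card_insert_le (n (p 0)) ({n (q 0), n (p 1), n (q 1)} : Finset _)
      have c2 := Finset.card_insert_le (n (q 0)) ({n (p 1), n (q 1)} : Finset _)
      have c3 := Finset.card_insert_le (n (p 1)) ({n (q 1)} : Finset _)
      simp only [Finset.card_singleton] at c3
      omega
    · intro z hz
      simp only [Finset.mem_insert, Finset.mem_singleton] at hz
      rcases hz with rfl | rfl | rfl | rfl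
      · exact (hGfact _ (hpq 0).1).2.2.2.2
      · exact (hGfact _ (hpq 0).2).2.2.2.2
      · exact (hGfact _ (hpq 1).1).2.2.2.2
      · exact (hGfact _ (hpq 1).2).2.2.2.2
    · intro x hxX' hwxy
      have hxG : x ∈ G := Finset.mem_filter.mpr ⟨hxX', hwxy⟩
      have hreach : ∀ x' ∈ G, ‖x - n x'‖ ≤ 3 * ρ y := by
        intro x' hx'
        have t1 := (hGfact x hxG).2.1
        have t2 := (hGfact x' hx').2.1
        have t3 := (hGfact x' hx').2.2.1
        have e1 : ‖x - n x'‖ ≤ ‖x - x'‖ + ‖x' - n x'‖ :=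
          norm_sub_le_norm_sub_add_norm_sub x x' (n x')
        have e2 : ‖x - x'‖ ≤ ‖x - y‖ + ‖y - x'‖ :=
          norm_sub_le_norm_sub_add_norm_sub x y x'
        have e3 : ‖y - x'‖ = ‖x' - y‖ := norm_sub_rev y x'
        linarith
      have hxnc := (hGfact x hxG).2.2.2.1
      have hnxY := (hGfact x hxG).2.2.2.2
      have hex : ∃ i : Fin 2, r (n x) < |x i - (n x) i| := by
        by_contra hcon
        push_neg at hcon
        have hle : ‖x - n x‖ ≤ r (n x) := by
          rw [pi_norm_le_iff_of_nonneg (hr (n x) hnxY)]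
          intro i
          simpa [Real.norm_eq_abs] using hcon i
        linarith
      obtain ⟨i, hi⟩ := hex
      have hcomp : ∀ z : Fin 2 → ℝ, |x i - z i| ≤ ‖x - z‖ := by
        intro z
        simpa [Real.norm_eq_abs] using norm_le_pi_norm (x - z) i
      rcases lt_abs.mp hi with hpos | hneg
      · -- x i > n x i + r (n x) : use q i
        refine ⟨n (q i), ?_, ?_, hreach (q i) (hpq i).2⟩
        · fin_cases i <;> simp [hpdef, hqdef]
        · have hq1 := hqmin i x hxG
          have h2 : r (n (q i)) < x i - n (q i) i := by
            simp only [hqdef]; linarith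
          have := hcomp (n (q i))
          have habs : x i - n (q i) i ≤ |x i - n (q i) i| := le_abs_self _
          linarith
      · -- n x i - x i > r (n x) : use p i
        refine ⟨n (p i), ?_, ?_, hreach (p i) (hpq i).1⟩
        · fin_cases i <;> simp [hpdef, hqdef]
        · have hp1 := hpmax i x hxG
          have h2 : r (n (p i)) < n (p i) i - x i := by
            simp only [hpdef]; linarith
          have := hcomp (n (p i))
          have habs : -(x i - n (p i) i) ≤ |x i - n (p i) i| := neg_le_abs _
          linarith
  choose sel hselcard hselY hsel using selex
  -- Step 3: the expanded radii
  have phiex : ∀ z : Fin 2 → ℝ, ∃ φ : Fin 2 → ℝ,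
      (Y.filter (fun y => z ∈ sel y)).Nonempty →
      φ ∈ Y.filter (fun y => z ∈ sel y) ∧
      ∀ y' ∈ Y.filter (fun y => z ∈ sel y), ρ y' ≤ ρ φ := by
    intro z
    by_cases h : (Y.filter (fun y => z ∈ sel y)).Nonempty
    · obtain ⟨φ, h1, h2⟩ := Finset.exists_max_image _ ρ h
      exact ⟨φ, fun _ => ⟨h1, h2⟩⟩
    · exact ⟨z, fun hh => absurd hh h⟩
  choose Φ hΦ using phiex
  set r' : (Fin 2 → ℝ) → ℝ := fun z =>
    if (Y.filter (fun y => z ∈ sel y)).Nonempty then max (r z) (3 * ρ (Φ z)) else r z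
    with hr'def
  have hrr' : ∀ z, r z ≤ r' z := by
    intro z
    simp only [hr'def]
    by_cases h : (Y.filter (fun y => z ∈ sel y)).Nonempty
    · rw [if_pos h]; exact le_max_left _ _
    · rw [if_neg h]
  refine ⟨r', fun y _ => hrr' y, ?_, ?_⟩
  · -- coverage
    intro x hxX
    by_cases hlt : coverCount Y r x < κ x
    · have hxX' : x ∈ X' := by rw [hX']; exact Finset.mem_filter.mpr ⟨hxX, hlt⟩
      obtain ⟨z, hzsel, hznc, hzreach⟩ := hsel (w x) x hxX' rfl
      have hzY : z ∈ Y := hselY (w x) z hzsel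
      have hwxY : w x ∈ Y := (hwn x hxX').1
      have hwF : w x ∈ Y.filter (fun y => z ∈ sel y) := Finset.mem_filter.mpr ⟨hwxY, hzsel⟩
      have hFne : (Y.filter (fun y => z ∈ sel y)).Nonempty := ⟨_, hwF⟩
      have hΦz := hΦ z hFne
      have hr'z : 3 * ρ (w x) ≤ r' z := by
        simp only [hr'def]
        rw [if_pos hFne]
        have h1 := hΦz.2 (w x) hwF
        have : 3 * ρ (w x) ≤ 3 * ρ (Φ z) := by linarith
        exact this.trans (le_max_right _ _)
      have hcov' : ‖x - z‖ ≤ r' z := le_trans hzreach hr'z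
      have hsubset : insert z (Y.filter fun y => ‖x - y‖ ≤ r y) ⊆
          Y.filter fun y => ‖x - y‖ ≤ r' y := by
        intro a ha
        rcases Finset.mem_insert.mp ha with rfl | ha
        · exact Finset.mem_filter.mpr ⟨hzY, hcov'⟩
        · obtain ⟨h1, h2⟩ := Finset.mem_filter.mp ha
          exact Finset.mem_filter.mpr ⟨h1, h2.trans (hrr' a)⟩
      have hznotin : z ∉ (Y.filter fun y => ‖x - y‖ ≤ r y) := by
        intro hzin
        exact absurd (Finset.mem_filter.mp hzin).2 (not_le.mpr hznc)
      have hcard1 := Finset.card_le_card hsubset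
      rw [Finset.card_insert_of_notMem hznotin] at hcard1
      have hold := hκ'cov x hxX
      unfold coverCount at hold hlt ⊢
      omega
    · have hsubset : (Y.filter fun y => ‖x - y‖ ≤ r y) ⊆
          (Y.filter fun y => ‖x - y‖ ≤ r' y) := by
        intro a ha
        obtain ⟨h1, h2⟩ := Finset.mem_filter.mp ha
        exact Finset.mem_filter.mpr ⟨h1, h2.trans (hrr' a)⟩
      have := Finset.card_le_card hsubset
      unfold coverCount at hlt ⊢
      omega
  · -- cost
    rw [← Finset.sum_sub_distrib]
    have hterm : ∀ z ∈ Y, r' z ^ α - r z ^ α ≤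
        (if (Y.filter (fun y => z ∈ sel y)).Nonempty then (3 * ρ (Φ z)) ^ α else 0) := by
      intro z hz
      by_cases h : (Y.filter (fun y => z ∈ sel y)).Nonempty
      · rw [if_pos h]
        simp only [hr'def]
        rw [if_pos h]
        have hρΦ : 0 ≤ ρ (Φ z) := hρ _ (Finset.mem_filter.mp (hΦ z h).1).1
        have h3 : 0 ≤ 3 * ρ (Φ z) := by linarith
        rcases max_cases (r z) (3 * ρ (Φ z)) with ⟨heq, _⟩ | ⟨heq, _⟩
        · rw [heq]; simp only [sub_self]; exact Real.rpow_nonneg h3 α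
        · rw [heq]
          have : 0 ≤ r z ^ α := Real.rpow_nonneg (hr z hz) α
          linarith
      · rw [if_neg h]
        simp only [hr'def]
        rw [if_neg h]
        simp
    have hmaps : ∀ z ∈ Y.filter (fun z => (Y.filter (fun y => z ∈ sel y)).Nonempty),
        Φ z ∈ Y := by
      intro z hz
      have h := (Finset.mem_filter.mp hz).2
      exact (Finset.mem_filter.mp (hΦ z h).1).1
    calc ∑ z ∈ Y, (r' z ^ α - r z ^ α)
        ≤ ∑ z ∈ Y, (if (Y.filter (fun y => z ∈ sel y)).Nonempty
            then (3 * ρ (Φ z)) ^ α else 0) := Finset.sum_le_sum hterm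
      _ = ∑ z ∈ Y.filter (fun z => (Y.filter (fun y => z ∈ sel y)).Nonempty),
            (3 * ρ (Φ z)) ^ α := (Finset.sum_filter _ _).symm
      _ = ∑ y ∈ Y, ∑ z ∈ (Y.filter (fun z => (Y.filter (fun y => z ∈ sel y)).Nonempty)).filter
            (fun z => Φ z = y), (3 * ρ (Φ z)) ^ α :=
          (Finset.sum_fiberwise_of_maps_to hmaps _).symm
      _ ≤ ∑ y ∈ Y, 4 * (3 * ρ y) ^ α := by
          apply Finset.sum_le_sum
          intro y hy
          have hcongr : ∑ z ∈ (Y.filter (fun z => (Y.filter (fun y => z ∈ sel y)).Nonempty)).filter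
              (fun z => Φ z = y), (3 * ρ (Φ z)) ^ α
              = ∑ z ∈ (Y.filter (fun z => (Y.filter (fun y => z ∈ sel y)).Nonempty)).filter
              (fun z => Φ z = y), (3 * ρ y) ^ α := by
            apply Finset.sum_congr rfl
            intro z hz
            rw [(Finset.mem_filter.mp hz).2]
          rw [hcongr, Finset.sum_const, nsmul_eq_mul]
          have hsubsel : (Y.filter (fun z => (Y.filter (fun y => z ∈ sel y)).Nonempty)).filter
              (fun z => Φ z = y) ⊆ sel y := by
            intro z hz
            obtain ⟨hz1, hz2⟩ := Finset.mem_filter.mp hz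
            have hne := (Finset.mem_filter.mp hz1).2
            have := (Finset.mem_filter.mp (hΦ z hne).1).2
            rwa [hz2] at this
          have hc : ((Y.filter (fun z => (Y.filter (fun y => z ∈ sel y)).Nonempty)).filter
              (fun z => Φ z = y)).card ≤ 4 :=
            (Finset.card_le_card hsubsel).trans (hselcard y)
          have hnn : (0:ℝ) ≤ (3 * ρ y) ^ α :=
            Real.rpow_nonneg (by have := hρ y hy; linarith) α
          exact mul_le_mul_of_nonneg_right (by exact_mod_cast hc) hnn
      _ = 4 * 3 ^ α * ∑ y ∈ Y, ρ y ^ α := by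
          rw [Finset.mul_sum]
          apply Finset.sum_congr rfl
          intro y hy
          rw [Real.mul_rpow (by norm_num) (hρ y hy)]
          ring
end
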